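/- Let S₁,...,S_N be pairwise-commuting involutions in M_d(ℂ) and let V₁,...,V_N be involutions such that V_j anticommutes with S_j and commutes with S_i for all i ≠ j, and such that all the V_j pairwise commute and each V_j commutes with every member of a further commuting family T₁,...,T_K of operators that also commute with all S_i. Define U = ∏_{j=1}^N exp((π/4)·S_j·V_j). Then U S_j U⁻¹ = -V_j and U T_i U⁻¹ = T_i for all i, j; in particular U·(-Σ_i T_i - Σ_j S_j)·U⁻¹ = -Σ_i T_i + Σ_j V_j. -/

import Mathlib

open NormedSpace in
lemma exp_smul_of_sq_eq_neg_one {d : ℕ} (A : Matrix (Fin d) (Fin d) ℂ)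
    (hA : A * A = -1) (r : ℝ) :
    NormedSpace.exp ((r : ℂ) • A) =
      ((Real.cos r : ℂ)) • (1 : Matrix (Fin d) (Fin d) ℂ) + (Real.sin r : ℂ) • A := by
  classical
  have hmul : ∀ z w : ℂ, (((z*w).re : ℂ) • 1 + ((z*w).im : ℂ) • A) =
      ((z.re : ℂ) • (1 : Matrix (Fin d) (Fin d) ℂ) + (z.im : ℂ) • A) *
        ((w.re : ℂ) • 1 + (w.im : ℂ) • A) := by
    intro z w
    simp only [add_mul, mul_add, smul_mul_assoc, mul_smul_comm, mul_one, one_mul, hA,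
      smul_smul, smul_neg, Complex.mul_re, Complex.mul_im, Complex.ofReal_sub,
      Complex.ofReal_add, Complex.ofReal_mul, sub_smul, add_smul]
    module
  set ψ : ℂ →+* Matrix (Fin d) (Fin d) ℂ :=
    { toFun := fun z => (z.re : ℂ) • 1 + (z.im : ℂ) • A
      map_one' := by simp
      map_zero' := by simp
      map_add' := by
        intro z w
        simp only [Complex.add_re, Complex.add_im, Complex.ofReal_add, add_smul]
        module
      map_mul' := fun z w => hmul z w } with hψdef
  have hψapp : ∀ z, ψ z = (z.re : ℂ) • 1 + (z.im : ℂ) • A := fun z => rfl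
  have hcont : Continuous ψ := by
    apply Continuous.add
    · exact ((Complex.continuous_ofReal.comp Complex.continuous_re).smul continuous_const)
    · exact ((Complex.continuous_ofReal.comp Complex.continuous_im).smul continuous_const)
  have key : ∀ z : ℂ, NormedSpace.exp (ψ z) = ψ (Complex.exp z) := by
    intro z
    have hs : HasSum (fun n : ℕ => ((n.factorial : ℂ))⁻¹ • z ^ n) (NormedSpace.exp z) :=
      NormedSpace.exp_series_hasSum_exp' z
    have hs2 := hs.map ψ hcont
    have heq : (ψ ∘ fun n : ℕ => ((n.factorial : ℂ))⁻¹ • z ^ n)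
        = fun n : ℕ => ((n.factorial : ℂ))⁻¹ • (ψ z) ^ n := by
      funext n
      have h1 : ((n.factorial : ℂ))⁻¹ • z ^ n = ((n.factorial : ℂ))⁻¹ * z ^ n := rfl
      have h2 : ψ (((n.factorial : ℂ))⁻¹)
          = ((n.factorial : ℂ))⁻¹ • (1 : Matrix (Fin d) (Fin d) ℂ) := by
        rw [hψapp]
        norm_num
      simp only [Function.comp_apply, h1, map_mul, map_pow, h2, smul_mul_assoc, one_mul]
    rw [heq] at hs2
    rw [NormedSpace.exp_eq_tsum (𝕂 := ℂ), Complex.exp_eq_exp_ℂ]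
    exact hs2.tsum_eq
  have h1 : (r : ℂ) • A = ψ ((r : ℂ) * Complex.I) := by
    rw [hψapp]
    simp [Complex.mul_I_re, Complex.mul_I_im]
  rw [h1, key, Complex.exp_mul_I, hψapp]
  simp [← Complex.ofReal_cos, ← Complex.ofReal_sin]

lemma conj_list_prod {M : Type*} [Monoid M] (l₁ l₂ : List M) (e X Y : M)
    (h₁ : ∀ a ∈ l₁, Commute a Y) (he : e * X = Y * e) (h₂ : ∀ a ∈ l₂, Commute a X) :
    (l₁ ++ e :: l₂).prod * X = Y * (l₁ ++ e :: l₂).prod := by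
  have c2 : l₂.prod * X = X * l₂.prod := (Commute.list_prod_left _ _ h₂).eq
  have c1 : l₁.prod * Y = Y * l₁.prod := (Commute.list_prod_left _ _ h₁).eq
  rw [List.prod_append, List.prod_cons]
  calc l₁.prod * (e * l₂.prod) * X = l₁.prod * (e * (l₂.prod * X)) := by
        simp only [mul_assoc]
    _ = l₁.prod * (e * X * l₂.prod) := by rw [c2, mul_assoc]
    _ = l₁.prod * Y * (e * l₂.prod) := by rw [he]; simp only [mul_assoc]
    _ = Y * (l₁.prod * (e * l₂.prod)) := by rw [c1, mul_assoc]

/-- Cleaning excitations: conjugation by `U = ∏_j exp((π/4) S_j V_j)` sends each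
`S_j` to `-V_j` and fixes every `T_i`. -/
theorem stmt_18 {d : ℕ} (N K : ℕ)
    (S V : Fin N → Matrix (Fin d) (Fin d) ℂ)
    (T : Fin K → Matrix (Fin d) (Fin d) ℂ)
    (hS : ∀ j, S j * S j = 1) (hV : ∀ j, V j * V j = 1)
    (hSS : ∀ i j, S i * S j = S j * S i)
    (hSV : ∀ j, S j * V j = -(V j * S j))
    (hSVo : ∀ i j, i ≠ j → S i * V j = V j * S i)
    (hVV : ∀ i j, V i * V j = V j * V i)
    (hTS : ∀ i j, T i * S j = S j * T i)
    (hTV : ∀ i j, T i * V j = V j * T i)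
    (hTT : ∀ i i', T i * T i' = T i' * T i)
    (U : Matrix (Fin d) (Fin d) ℂ)
    (hU : U = (List.ofFn fun j =>
        NormedSpace.exp (((Real.pi / 4 : ℝ) : ℂ) • (S j * V j))).prod) :
    (∀ j, U * S j * U⁻¹ = -(V j)) ∧ (∀ i, U * T i * U⁻¹ = T i) := by
  classical
  set c : ℂ := (Real.cos (Real.pi / 4) : ℂ) with hc
  set s : ℂ := (Real.sin (Real.pi / 4) : ℂ) with hs
  have hcs : c = s := by
    rw [hc, hs, Real.cos_pi_div_four, Real.sin_pi_div_four]
  have hone : c * c + s * s = 1 := by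
    have hr : Real.cos (Real.pi/4) * Real.cos (Real.pi/4)
        + Real.sin (Real.pi/4) * Real.sin (Real.pi/4) = 1 := by
      nlinarith [Real.sin_sq_add_cos_sq (Real.pi/4)]
    rw [hc, hs, ← Complex.ofReal_mul, ← Complex.ofReal_mul, ← Complex.ofReal_add, hr,
      Complex.ofReal_one]
  have hVS : ∀ j, V j * S j = -(S j * V j) := fun j => by rw [hSV j, neg_neg]
  have hAA : ∀ j, (S j * V j) * (S j * V j) = -1 := by
    intro j
    have e1 : S j * V j * (S j * V j) = S j * (V j * S j) * V j := by noncomm_ring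
    rw [e1, hVS, mul_neg, neg_mul]
    have e2 : S j * (S j * V j) * V j = S j * S j * (V j * V j) := by noncomm_ring
    rw [e2, hS j, hV j, one_mul]
  have hSVS : ∀ j, S j * V j * S j = -(V j) := by
    intro j
    have e1 : S j * V j * S j = S j * (V j * S j) := by noncomm_ring
    rw [e1, hVS, mul_neg]
    have e2 : S j * (S j * V j) = S j * S j * V j := by noncomm_ring
    rw [e2, hS j, one_mul]
  have hVSV : ∀ j, V j * (S j * V j) = -(S j) := by
    intro j
    have e1 : V j * (S j * V j) = V j * S j * V j := by noncomm_ring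
    rw [e1, hVS, neg_mul]
    have e2 : S j * V j * V j = S j * (V j * V j) := by noncomm_ring
    rw [e2, hV j, mul_one]
  set E : Fin N → Matrix (Fin d) (Fin d) ℂ := fun j => c • 1 + s • (S j * V j) with hE
  have hU' : U = (List.ofFn E).prod := by
    rw [hU]
    have hfe : (fun j => NormedSpace.exp (((Real.pi / 4 : ℝ) : ℂ) • (S j * V j))) = E := by
      funext j
      exact exp_smul_of_sq_eq_neg_one (S j * V j) (hAA j) (Real.pi / 4)
    rw [hfe]
  -- units
  have hEinv : ∀ j, E j * (c • 1 - s • (S j * V j)) = 1 ∧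
      (c • 1 - s • (S j * V j)) * E j = 1 := by
    intro j
    constructor
    · have expand : (c • (1 : Matrix (Fin d) (Fin d) ℂ) + s • (S j * V j)) *
          (c • 1 - s • (S j * V j)) = (c * c + s * s) • 1 := by
        simp only [mul_sub, add_mul, smul_mul_assoc, mul_smul_comm, mul_one, one_mul,
          hAA j, smul_smul, smul_neg, sub_neg_eq_add]
        module
      rw [hE]
      rw [expand, hone, one_smul]
    · have expand : (c • (1 : Matrix (Fin d) (Fin d) ℂ) - s • (S j * V j)) *
          (c • 1 + s • (S j * V j)) = (c * c + s * s) • 1 := by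
        simp only [mul_add, sub_mul, smul_mul_assoc, mul_smul_comm, mul_one, one_mul,
          hAA j, smul_smul, smul_neg, sub_neg_eq_add]
        module
      rw [hE]
      rw [expand, hone, one_smul]
  have hEunit : ∀ j, IsUnit (E j) := by
    intro j
    exact ⟨⟨E j, c • 1 - s • (S j * V j), (hEinv j).1, (hEinv j).2⟩, rfl⟩
  have hUunit : IsUnit U := by
    rw [hU']
    apply List.prod_isUnit
    intro m hm
    rw [List.mem_ofFn] at hm
    obtain ⟨j, rfl⟩ := hm
    exact hEunit j
  have hUinv : U * U⁻¹ = 1 :=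
    Matrix.mul_nonsing_inv _ ((Matrix.isUnit_iff_isUnit_det U).1 hUunit)
  -- commutation helper
  have hEcomm : ∀ (k : Fin N) (Y : Matrix (Fin d) (Fin d) ℂ),
      (S k * V k) * Y = Y * (S k * V k) → Commute (E k) Y := by
    intro k Y hY
    show E k * Y = Y * E k
    rw [hE]
    simp only [add_mul, mul_add, smul_mul_assoc, mul_smul_comm, one_mul, mul_one, hY]
  have hcommS : ∀ (k j : Fin N), k ≠ j → Commute (E k) (S j) := by
    intro k j hkj
    apply hEcomm
    calc S k * V k * S j = S k * (V k * S j) := by noncomm_ring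
      _ = S k * (S j * V k) := by rw [hSVo j k (Ne.symm hkj)]
      _ = S k * S j * V k := by noncomm_ring
      _ = S j * S k * V k := by rw [hSS k j]
      _ = S j * (S k * V k) := by noncomm_ring
  have hcommV : ∀ (k j : Fin N), k ≠ j → Commute (E k) (V j) := by
    intro k j hkj
    apply hEcomm
    calc S k * V k * V j = S k * (V k * V j) := by noncomm_ring
      _ = S k * (V j * V k) := by rw [hVV k j]
      _ = S k * V j * V k := by noncomm_ring
      _ = V j * S k * V k := by rw [hSVo k j hkj]
      _ = V j * (S k * V k) := by noncomm_ring
  have hcommT : ∀ (k : Fin N) (i : Fin K), Commute (E k) (T i) := by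
    intro k i
    apply hEcomm
    calc S k * V k * T i = S k * (V k * T i) := by noncomm_ring
      _ = S k * (T i * V k) := by rw [hTV i k]
      _ = S k * T i * V k := by noncomm_ring
      _ = T i * S k * V k := by rw [hTS i k]
      _ = T i * (S k * V k) := by noncomm_ring
  -- per-factor switch
  have hswitch : ∀ j, E j * S j = (-(V j)) * E j := by
    intro j
    rw [hE]
    simp only [add_mul, mul_add, smul_mul_assoc, mul_smul_comm, one_mul, mul_one,
      neg_mul, mul_neg, smul_neg, hSVS j, hVSV j, neg_neg]
    rw [hcs]
    abel
  constructor
  · intro j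
    have hjmem : j ∈ List.finRange N := List.mem_finRange j
    obtain ⟨l₁, l₂, hsplit⟩ := List.append_of_mem hjmem
    have hnd : (l₁ ++ j :: l₂).Nodup := by rw [← hsplit]; exact List.nodup_finRange N
    have hndparts := List.nodup_append'.mp hnd
    have hj1 : j ∉ l₁ := fun h => (hndparts.2.2 h) List.mem_cons_self
    have hj2 : j ∉ l₂ := (List.nodup_cons.mp hndparts.2.1).1
    have hUdecomp : U = ((l₁.map E) ++ (E j) :: (l₂.map E)).prod := by
      rw [hU', List.ofFn_eq_map, hsplit, List.map_append, List.map_cons]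
    have hUS : U * S j = (-(V j)) * U := by
      rw [hUdecomp]
      apply conj_list_prod
      · intro a ha
        rw [List.mem_map] at ha
        obtain ⟨k, hk, rfl⟩ := ha
        have hkj : k ≠ j := fun h => hj1 (h ▸ hk)
        exact (hcommV k j hkj).neg_right
      · exact hswitch j
      · intro a ha
        rw [List.mem_map] at ha
        obtain ⟨k, hk, rfl⟩ := ha
        have hkj : k ≠ j := fun h => hj2 (h ▸ hk)
        exact hcommS k j hkj
    rw [hUS, mul_assoc, hUinv, mul_one]
  · intro i
    have hUT : U * T i = T i * U := by
      rw [hU']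
      exact (Commute.list_prod_left _ _ (by
        intro a ha
        rw [List.mem_ofFn] at ha
        obtain ⟨k, rfl⟩ := ha
        exact hcommT k i)).eq
    rw [hUT, mul_assoc, hUinv, mul_one]
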